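/- Let n ≥ 1, 1 < p < ∞, 0 < q₁ < p−1, 0 < q₂ < p−1, 0 < α < n/p, and let σ be a nonnegative Radon measure on ℝⁿ such that, for Lebesgue-a.e. x ∈ ℝⁿ, W_{α,p}((W_{α,p}σ)^{γ₂q₁} dσ)(x) ≤ λ(W_{α,p}σ(x) + (W_{α,p}σ(x))^{γ₁}) for some λ > 0. Then there exists a constant c > 0 depending only on p, q₁ and q₂ such that, for Lebesgue-a.e. x ∈ ℝⁿ, W_{α,p}((W_{α,p}σ)^{q₁} dσ)(x) ≤ c(1+λ)(W_{α,p}σ(x) + (W_{α,p}σ(x))^{γ₁}). -/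

import Mathlib

open MeasureTheory Metric Set ENNReal

noncomputable section

/-- Euclidean space `ℝⁿ`. -/
abbrev Rn (n : ℕ) := EuclideanSpace ℝ (Fin n)

/-- The Wolff potential `W_{α,p}μ(x) = ∫₀^∞ (μ(B(x,t))/t^{n−αp})^{1/(p−1)} dt/t`. -/
def wolff (n : ℕ) (α p : ℝ) (μ : Measure (Rn n)) (x : Rn n) : ℝ≥0∞ :=
  ∫⁻ t in Ioi (0 : ℝ),
    (μ (ball x t) / ENNReal.ofReal (t ^ ((n : ℝ) - α * p))) ^ (1 / (p - 1))
      * ENNReal.ofReal (1 / t)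

/-- `γ₁ = (p−1)(p−1+q₁)/((p−1)²−q₁q₂)`. -/
def gamma1 (p q₁ q₂ : ℝ) : ℝ := (p - 1) * (p - 1 + q₁) / ((p - 1) ^ 2 - q₁ * q₂)

/-- `γ₂ = (p−1)(p−1+q₂)/((p−1)²−q₁q₂)`. -/
def gamma2 (p q₁ q₂ : ℝ) : ℝ := (p - 1) * (p - 1 + q₂) / ((p - 1) ^ 2 - q₁ * q₂)

/-- The Riesz potential `I_β μ(x) = ∫ |x−y|^{β−n} dμ(y)`. -/
def riesz (n : ℕ) (β : ℝ) (μ : Measure (Rn n)) (x : Rn n) : ℝ≥0∞ :=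
  ∫⁻ y, ENNReal.ofReal (‖x - y‖ ^ (β - (n : ℝ))) ∂μ

/-- The `(α,p)`-capacity of a set `E ⊆ ℝⁿ`. -/
def capacity (n : ℕ) (α p : ℝ) (E : Set (Rn n)) : ℝ≥0∞ :=
  ⨅ (f : Rn n → ℝ≥0∞) (_ : Measurable f)
    (_ : ∀ x ∈ E, 1 ≤ riesz n α (volume.withDensity f) x),
    ∫⁻ x, f x ^ p

/-- Condition (F): `∫₁^∞ (σ(B(0,t))/t^{n−αp})^{1/(p−1)} dt/t < ∞`. -/
def condF (n : ℕ) (α p : ℝ) (σ : Measure (Rn n)) : Prop :=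
  ∫⁻ t in Ioi (1 : ℝ),
    (σ (ball (0 : Rn n) t) / ENNReal.ofReal (t ^ ((n : ℝ) - α * p))) ^ (1 / (p - 1))
      * ENNReal.ofReal (1 / t) < ∞

/-- Condition (C): `σ(E) ≤ C_σ · cap_{α,p}(E)` for all compact sets `E`. -/
def condC (n : ℕ) (α p Cσ : ℝ) (σ : Measure (Rn n)) : Prop :=
  ∀ E : Set (Rn n), IsCompact E → σ E ≤ ENNReal.ofReal Cσ * capacity n α p E

/-- `u ∈ L^s_loc(ℝⁿ, dσ)`: `∫_B u^s dσ < ∞` for every ball `B`. -/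
def locIn (n : ℕ) (σ : Measure (Rn n)) (s : ℝ) (u : Rn n → ℝ≥0∞) : Prop :=
  ∀ (x : Rn n) (r : ℝ), ∫⁻ y in ball x r, u y ^ s ∂σ < ∞

/-- `(u,v)` is a solution of the Wolff integral system. -/
def isWolffSol (n : ℕ) (α p q₁ q₂ : ℝ) (σ : Measure (Rn n))
    (u v : Rn n → ℝ≥0∞) : Prop :=
  Measurable u ∧ Measurable v ∧ locIn n σ q₂ u ∧ locIn n σ q₁ v ∧
  (∀ᵐ x ∂σ, u x = wolff n α p (σ.withDensity fun y => v y ^ q₁) x) ∧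
  (∀ᵐ x ∂σ, v x = wolff n α p (σ.withDensity fun y => u y ^ q₂) x)

/-- `(u,v)` is a supersolution of the Wolff integral system. -/
def isWolffSuper (n : ℕ) (α p q₁ q₂ : ℝ) (σ : Measure (Rn n))
    (u v : Rn n → ℝ≥0∞) : Prop :=
  Measurable u ∧ Measurable v ∧ locIn n σ q₂ u ∧ locIn n σ q₁ v ∧
  (∀ᵐ x ∂σ, wolff n α p (σ.withDensity fun y => v y ^ q₁) x ≤ u x) ∧
  (∀ᵐ x ∂σ, wolff n α p (σ.withDensity fun y => u y ^ q₂) x ≤ v x)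

/-- `(u,v)` is nontrivial: neither `u` nor `v` vanishes `σ`-a.e. -/
def nontrivialPair (n : ℕ) (σ : Measure (Rn n)) (u v : Rn n → ℝ≥0∞) : Prop :=
  ¬ (∀ᵐ x ∂σ, u x = 0) ∧ ¬ (∀ᵐ x ∂σ, v x = 0)

/-- Condition (W_λ). -/
def condW (n : ℕ) (α p q₁ q₂ lam : ℝ) (σ : Measure (Rn n)) : Prop :=
  ∀ᵐ x ∂(volume : Measure (Rn n)),
    (wolff n α p (σ.withDensity fun y => (wolff n α p σ y) ^ (gamma2 p q₁ q₂ * q₁)) x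
      ≤ ENNReal.ofReal lam *
        (wolff n α p σ x + (wolff n α p σ x) ^ gamma1 p q₁ q₂)) ∧
    (wolff n α p (σ.withDensity fun y => (wolff n α p σ y) ^ (gamma1 p q₁ q₂ * q₂)) x
      ≤ ENNReal.ofReal lam *
        (wolff n α p σ x + (wolff n α p σ x) ^ gamma2 p q₁ q₂)) ∧
    (wolff n α p σ x + (wolff n α p σ x) ^ gamma1 p q₁ q₂ < ∞) ∧
    (wolff n α p σ x + (wolff n α p σ x) ^ gamma2 p q₁ q₂ < ∞)

/-! The pointwise bound `w ^ q₁ ≤ 1 + w ^ (γ₂ q₁)` (valid since `γ₂ ≥ 1`) dominates the measure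
`(W_{α,p}σ)^{q₁} dσ` by `σ + (W_{α,p}σ)^{γ₂q₁} dσ`. The Wolff potential is monotone in the measure and
quasi-additive, `W(μ + ν) ≤ 2^{1/(p−1)} (Wμ + Wν)`, so the left-hand side is at most
`2^{1/(p−1)} (W_{α,p}σ + λ (W_{α,p}σ + (W_{α,p}σ)^{γ₁}))`. -/

def wolffIntegrand (n : ℕ) (α p : ℝ) (μ : Measure (Rn n)) (x : Rn n) (t : ℝ) : ℝ≥0∞ :=
  (μ (ball x t) / ENNReal.ofReal (t ^ ((n : ℝ) - α * p))) ^ (1 / (p - 1)) * ENNReal.ofReal (1 / t)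

lemma wolff_eq_lintegral_wolffIntegrand (n : ℕ) (α p : ℝ) (μ : Measure (Rn n)) (x : Rn n) :
    wolff n α p μ x = ∫⁻ t in Ioi (0 : ℝ), wolffIntegrand n α p μ x t :=
  rfl

lemma measurable_wolffIntegrand (n : ℕ) (α p : ℝ) (μ : Measure (Rn n)) (x : Rn n) :
    Measurable (wolffIntegrand n α p μ x) := by
  have hball : Measurable fun t : ℝ => μ (ball x t) :=
    Monotone.measurable fun s t hst => measure_mono (ball_subset_ball hst)
  have hpow : Measurable fun t : ℝ => ENNReal.ofReal (t ^ ((n : ℝ) - α * p)) := by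
    measurability
  exact ((hball.div hpow).pow_const _).mul (measurable_const.div measurable_id).ennreal_ofReal

section WolffPotential

variable {n : ℕ} {α p : ℝ}

lemma wolffIntegrand_mono (hp : 1 < p) {μ ν : Measure (Rn n)} (h : μ ≤ ν) (x : Rn n) (t : ℝ) :
    wolffIntegrand n α p μ x t ≤ wolffIntegrand n α p ν x t := by
  have : 0 ≤ 1 / (p - 1) := one_div_nonneg.2 (sub_pos.2 hp).le
  unfold wolffIntegrand
  gcongr

lemma wolff_mono (hp : 1 < p) {μ ν : Measure (Rn n)} (h : μ ≤ ν) (x : Rn n) :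
    wolff n α p μ x ≤ wolff n α p ν x :=
  lintegral_mono fun t => wolffIntegrand_mono hp h x t

lemma wolffIntegrand_add_le (hp : 1 < p) (μ ν : Measure (Rn n)) (x : Rn n) (t : ℝ) :
    wolffIntegrand n α p (μ + ν) x t ≤
      2 ^ (1 / (p - 1)) * (wolffIntegrand n α p μ x t + wolffIntegrand n α p ν x t) := by
  have hr : 0 ≤ 1 / (p - 1) := one_div_nonneg.2 (sub_pos.2 hp).le
  calc wolffIntegrand n α p (μ + ν) x t
      ≤ 2 ^ (1 / (p - 1)) * ((μ (ball x t) / ENNReal.ofReal (t ^ ((n : ℝ) - α * p))) ^ (1 / (p - 1))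
          + (ν (ball x t) / ENNReal.ofReal (t ^ ((n : ℝ) - α * p))) ^ (1 / (p - 1)))
          * ENNReal.ofReal (1 / t) := by
        unfold wolffIntegrand
        rw [Measure.add_apply, ENNReal.add_div]
        gcongr
        exact ENNReal.add_rpow_le_two_rpow_mul_rpow_add_rpow _ _ hr
    _ = 2 ^ (1 / (p - 1)) * (wolffIntegrand n α p μ x t + wolffIntegrand n α p ν x t) := by
        unfold wolffIntegrand
        ring

lemma wolff_add_le (hp : 1 < p) (μ ν : Measure (Rn n)) (x : Rn n) :
    wolff n α p (μ + ν) x ≤ 2 ^ (1 / (p - 1)) * (wolff n α p μ x + wolff n α p ν x) := by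
  have hr : 0 ≤ 1 / (p - 1) := one_div_nonneg.2 (sub_pos.2 hp).le
  simp only [wolff_eq_lintegral_wolffIntegrand]
  calc ∫⁻ t in Ioi (0 : ℝ), wolffIntegrand n α p (μ + ν) x t
      ≤ ∫⁻ t in Ioi (0 : ℝ),
          2 ^ (1 / (p - 1)) * (wolffIntegrand n α p μ x t + wolffIntegrand n α p ν x t) :=
        lintegral_mono fun t => wolffIntegrand_add_le hp μ ν x t
    _ = _ := by
        rw [lintegral_const_mul' _ _ (ENNReal.rpow_lt_top_of_nonneg hr ENNReal.ofNat_ne_top).ne,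
          lintegral_add_left (measurable_wolffIntegrand n α p μ x)]

end WolffPotential

lemma ENNReal.rpow_le_one_add_rpow (x : ℝ≥0∞) {q s : ℝ} (hq : 0 ≤ q) (hqs : q ≤ s) :
    x ^ q ≤ 1 + x ^ s := by
  rcases le_total x 1 with hx | hx
  · exact (ENNReal.rpow_le_one hx hq).trans le_self_add
  · exact (ENNReal.rpow_le_rpow_of_exponent_le hx hqs).trans le_add_self

lemma withDensity_rpow_le_add_withDensity_rpow {X : Type*} [MeasurableSpace X] (μ : Measure X)
    (f : X → ℝ≥0∞) {q s : ℝ} (hq : 0 ≤ q) (hqs : q ≤ s) :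
    μ.withDensity (fun y => f y ^ q) ≤ μ + μ.withDensity (fun y => f y ^ s) := by
  calc μ.withDensity (fun y => f y ^ q)
      ≤ μ.withDensity (1 + fun y => f y ^ s) :=
        withDensity_mono (ae_of_all _ fun y => ENNReal.rpow_le_one_add_rpow (f y) hq hqs)
    _ = μ + μ.withDensity (fun y => f y ^ s) := by
        rw [withDensity_add_left measurable_one, withDensity_one]

lemma one_le_gamma2 {p q₁ q₂ : ℝ} (hp : 1 < p) (hq₁ : 0 ≤ q₁) (hq₂ : 0 ≤ q₂)
    (hq : q₁ * q₂ < (p - 1) ^ 2) : 1 ≤ gamma2 p q₁ q₂ := by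
  rw [gamma2, le_div_iff₀ (sub_pos.2 hq)]
  nlinarith

/-- Estimate in the proof of Claim 4: the first inequality of condition (W_λ) implies a
similar bound for `W_{α,p}((W_{α,p}σ)^{q₁} dσ)`, with a constant depending only on
`p, q₁, q₂` (times `1 + λ`). -/
theorem wolff_q1_estimate (p q₁ q₂ : ℝ)
    (hp : 1 < p) (hq₁ : 0 < q₁) (hq₁' : q₁ < p - 1)
    (hq₂ : 0 < q₂) (hq₂' : q₂ < p - 1) :
    ∃ c : ℝ, 0 < c ∧
      ∀ (n : ℕ), 1 ≤ n →
        ∀ α : ℝ, 0 < α → α < (n : ℝ) / p →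
          ∀ lam : ℝ, 0 < lam →
            ∀ σ : Measure (Rn n), IsLocallyFiniteMeasure σ →
              (∀ᵐ x ∂(volume : Measure (Rn n)),
                wolff n α p (σ.withDensity fun y =>
                  (wolff n α p σ y) ^ (gamma2 p q₁ q₂ * q₁)) x ≤
                  ENNReal.ofReal lam *
                    (wolff n α p σ x + (wolff n α p σ x) ^ gamma1 p q₁ q₂)) →
              ∀ᵐ x ∂(volume : Measure (Rn n)),
                wolff n α p (σ.withDensity fun y => (wolff n α p σ y) ^ q₁) x ≤
                  ENNReal.ofReal (c * (1 + lam)) *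
                    (wolff n α p σ x + (wolff n α p σ x) ^ gamma1 p q₁ q₂) := by
  have hq : q₁ * q₂ < (p - 1) ^ 2 := by nlinarith
  have hq₁γ : q₁ ≤ gamma2 p q₁ q₂ * q₁ :=
    le_mul_of_one_le_left hq₁.le (one_le_gamma2 hp hq₁.le hq₂.le hq)
  refine ⟨2 ^ (1 / (p - 1)), by positivity, ?_⟩
  intro n _ α _ _ lam hlam σ _ hW
  filter_upwards [hW] with x hx
  set A := wolff n α p σ x + wolff n α p σ x ^ gamma1 p q₁ q₂
  calc wolff n α p (σ.withDensity fun y => wolff n α p σ y ^ q₁) x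
      ≤ wolff n α p (σ + σ.withDensity fun y => wolff n α p σ y ^ (gamma2 p q₁ q₂ * q₁)) x :=
        wolff_mono hp (withDensity_rpow_le_add_withDensity_rpow σ _ hq₁.le hq₁γ) x
    _ ≤ 2 ^ (1 / (p - 1)) * (wolff n α p σ x +
          wolff n α p (σ.withDensity fun y => wolff n α p σ y ^ (gamma2 p q₁ q₂ * q₁)) x) :=
        wolff_add_le hp _ _ x
    _ ≤ 2 ^ (1 / (p - 1)) * (A + ENNReal.ofReal lam * A) := by
        gcongr
        exact le_self_add
    _ = ENNReal.ofReal (2 ^ (1 / (p - 1)) * (1 + lam)) * A := by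
        rw [ENNReal.ofReal_mul (by positivity), ← ENNReal.ofReal_rpow_of_pos two_pos,
          ENNReal.ofReal_ofNat, ENNReal.ofReal_add zero_le_one hlam.le, ENNReal.ofReal_one]
        ring
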